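/- The ratio-of-Schur Q-matrix is conservative: for distinct positive v_1,...,v_n and x ∈ W^n = {x ∈ ℤ^n : x_1 ≤ ... ≤ x_n}, Σ_{i=1}^n [ (S_{x+e_i}(v)/S_x(v)) 1_{x+e_i ∈ W^n} + (S_{x-e_i}(v)/S_x(v)) 1_{x-e_i ∈ W^n} ] = Σ_{i=1}^n (v_i + v_i^{-1}). -/

import Mathlib

open scoped Classical

/-- The Schur function `S_x(v) = det(v a ^ (x b + b - 1)) / det(v a ^ (b - 1))`
(1-based; here 0-based so the exponents are `x b + b` and `b`). -/
noncomputable def schurS {n : ℕ} (v : Fin n → ℝ) (x : Fin n → ℤ) : ℝ :=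
  Matrix.det (Matrix.of fun a b : Fin n => v a ^ (x b + (b : ℤ))) /
    Matrix.det (Matrix.of fun a b : Fin n => v a ^ (b : ℕ))

/-!
Put `λ_b = x_b + b`, so that `S_y(v) / S_x(v) = det (v_a ^ (y_b + b)) / det (v_a ^ λ_b)`.
Adding `± e_i` to `x` replaces column `i` of the alternant `(v_a ^ λ_b)` by `v_a ^ (λ_i ± 1)`;
when `x ± e_i` leaves the chamber, that column coincides with a neighbouring one, so the
indicator may be dropped. By linearity in column `i` the two terms of index `i` combine into
the alternant with column `i` multiplied entrywise by `v + v⁻¹`, and summing over `i` gives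
`(∑_a (v_a + v_a⁻¹)) · det (v_a ^ λ_b)`. The alternant does not vanish because a sum of `n`
real powers with distinct exponents has at most `n - 1` positive zeros (Rolle's theorem and
induction).
-/

open Set Function

theorem exists_strictMono_deriv_eq_zero {n : ℕ} {f : ℝ → ℝ} {t : Fin (n + 1) → ℝ}
    (ht : StrictMono t) (hf : ContinuousOn f (Ici (t 0))) (hzero : ∀ i, f (t i) = 0) :
    ∃ s : Fin n → ℝ, StrictMono s ∧ (∀ i, t 0 < s i) ∧ ∀ i, deriv f (s i) = 0 := by
  have rolle (i : Fin n) : ∃ c ∈ Ioo (t i.castSucc) (t i.succ), deriv f c = 0 :=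
    exists_deriv_eq_zero (ht i.castSucc_lt_succ)
      (hf.mono fun u hu => (ht.monotone (Fin.zero_le _)).trans hu.1)
      ((hzero _).trans (hzero _).symm)
  choose s hs hderiv using rolle
  refine ⟨s, fun i j hij => ?_, fun i => ?_, hderiv⟩
  · calc s i < t i.succ := (hs i).2
      _ ≤ t j.castSucc := ht.monotone (Fin.succ_le_castSucc_iff.mpr hij)
      _ < s j := (hs j).1
  · exact (ht.monotone (Fin.zero_le _)).trans_lt (hs i).1

theorem hasDerivAt_sum_mul_rpow {ι : Type*} [Fintype ι] (c e : ι → ℝ) {u : ℝ}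
    (hu : 0 < u) :
    HasDerivAt (fun u => ∑ b, c b * u ^ e b) (∑ b, c b * (e b * u ^ (e b - 1))) u :=
  HasDerivAt.fun_sum fun b _ => (Real.hasDerivAt_rpow_const (Or.inl hu.ne')).const_mul (c b)

theorem eq_zero_of_sum_mul_rpow_eq_zero {n : ℕ} {μ : Fin n → ℝ} (hμ : Injective μ)
    {t : Fin n → ℝ} (ht : StrictMono t) (ht0 : ∀ i, 0 < t i) {c : Fin n → ℝ}
    (hc : ∀ i, ∑ b, c b * t i ^ μ b = 0) : c = 0 := by
  induction n with
  | zero => exact funext fun b => b.elim0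
  | succ n ih =>
    set e : Fin (n + 1) → ℝ := fun b => μ b - μ 0
    set g : ℝ → ℝ := fun u => ∑ b, c b * u ^ e b
    have hg (i : Fin (n + 1)) : g (t i) = t i ^ (-μ 0) * ∑ b, c b * t i ^ μ b := by
      simp only [g, e, Finset.mul_sum]
      refine Finset.sum_congr rfl fun b _ => ?_
      rw [mul_left_comm, ← Real.rpow_add (ht0 i), neg_add_eq_sub]
    have hg_cont : ContinuousOn g (Ici (t 0)) := fun u hu =>
      (hasDerivAt_sum_mul_rpow c e ((ht0 0).trans_le hu)).continuousAt.continuousWithinAt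
    obtain ⟨s, hs, hs0, hderiv⟩ := exists_strictMono_deriv_eq_zero ht hg_cont
      fun i => (hg i).trans (by rw [hc, mul_zero])
    have hsucc : (fun b => c (Fin.succ b) * e b.succ) = 0 := by
      refine ih (μ := fun b => e b.succ - 1) (fun b b' h => ?_) hs
        (fun i => (ht0 0).trans (hs0 i)) fun i => ?_
      · exact Fin.succ_injective _ (hμ (by simpa [e] using h))
      · have := hderiv i
        rw [(hasDerivAt_sum_mul_rpow c e ((ht0 0).trans (hs0 i))).deriv, Fin.sum_univ_succ] at this
        simpa [e, mul_assoc] using this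
    have hc_succ (b : Fin n) : c b.succ = 0 := by
      have hne : e b.succ ≠ 0 := sub_ne_zero.mpr fun h => Fin.succ_ne_zero b (hμ h)
      exact (mul_eq_zero.mp (congrFun hsucc b)).resolve_right hne
    have hc_zero : c 0 = 0 := by
      have := hc 0
      simp only [Fin.sum_univ_succ, hc_succ, zero_mul, Finset.sum_const_zero, add_zero] at this
      exact (mul_eq_zero.mp this).resolve_right (Real.rpow_pos_of_pos (ht0 0) _).ne'
    exact funext fun b => Fin.cases hc_zero hc_succ b

theorem Matrix.det_of_rpow_ne_zero {n : ℕ} {t : Fin n → ℝ} (ht : Injective t)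
    (ht0 : ∀ i, 0 < t i) {μ : Fin n → ℝ} (hμ : Injective μ) :
    (Matrix.of fun a b => t a ^ μ b).det ≠ 0 := by
  intro hdet
  obtain ⟨c, hc0, hc⟩ := Matrix.exists_mulVec_eq_zero_iff.mpr hdet
  have hsort : StrictMono (t ∘ Tuple.sort t) :=
    (Tuple.monotone_sort t).strictMono_of_injective (ht.comp (Tuple.sort t).injective)
  refine hc0 (eq_zero_of_sum_mul_rpow_eq_zero hμ hsort (fun i => ht0 _) fun i => ?_)
  simpa [Matrix.mulVec, dotProduct, mul_comm] using congrFun hc (Tuple.sort t i)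

theorem Matrix.sum_det_updateCol_mul {ι R : Type*} [Fintype ι] [DecidableEq ι] [CommRing R]
    (A : Matrix ι ι R) (d : ι → R) :
    ∑ i, (A.updateCol i fun a => d a * A a i).det = (∑ a, d a) * A.det := by
  have hcol (i : ι) : (A.updateCol i fun a => d a * A a i).det
      = ∑ a, A.adjugate i a * (d a * A a i) := by
    rw [← Matrix.cramer_apply, Matrix.cramer_eq_adjugate_mulVec]
    rfl
  have hdiag (a : ι) : ∑ i, A.adjugate i a * (d a * A a i) = d a * A.det := by
    have : (A * A.adjugate) a a = A.det := by simp [Matrix.mul_adjugate]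
    rw [← this, Matrix.mul_apply, Finset.mul_sum]
    exact Finset.sum_congr rfl fun i _ => by ring
  simp_rw [hcol]
  rw [Finset.sum_comm, Finset.sum_mul]
  exact Finset.sum_congr rfl fun a _ => hdiag a

theorem exists_succ_eq_of_not_monotone_add_single {n : ℕ} {x : Fin n → ℤ} (hx : Monotone x)
    {i : Fin n} (h : ¬ Monotone (x + Pi.single i 1)) :
    ∃ j : Fin n, (j : ℕ) = i + 1 ∧ x j = x i := by
  simp only [Monotone, not_forall, not_le] at h
  obtain ⟨a, b, hab, hlt⟩ := h
  simp only [Pi.add_apply, Pi.single_apply] at hlt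
  have hxab := hx hab
  obtain rfl : a = i := by
    by_contra hai
    simp only [hai, if_false] at hlt
    split_ifs at hlt <;> omega
  obtain hab | rfl := hab.lt_or_eq
  · simp only [hab.ne', if_false, if_true] at hlt
    have hj : (a : ℕ) + 1 < n := by omega
    refine ⟨⟨a + 1, hj⟩, rfl, le_antisymm ?_ (hx (Fin.le_def.mpr (by simp)))⟩
    have := hx (show (⟨a + 1, hj⟩ : Fin n) ≤ b from Fin.le_def.mpr hab)
    omega
  · exact (lt_irrefl _ hlt).elim

theorem exists_pred_eq_of_not_monotone_sub_single {n : ℕ} {x : Fin n → ℤ} (hx : Monotone x)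
    {i : Fin n} (h : ¬ Monotone (x - Pi.single i 1)) :
    ∃ j : Fin n, (j : ℕ) + 1 = i ∧ x j = x i := by
  simp only [Monotone, not_forall, not_le] at h
  obtain ⟨a, b, hab, hlt⟩ := h
  simp only [Pi.sub_apply, Pi.single_apply] at hlt
  have hxab := hx hab
  obtain rfl : b = i := by
    by_contra hbi
    simp only [hbi, if_false] at hlt
    split_ifs at hlt <;> omega
  obtain hab | rfl := hab.lt_or_eq
  · simp only [hab.ne, if_false, if_true] at hlt
    have hj : (b : ℕ) - 1 < n := by omega
    refine ⟨⟨b - 1, hj⟩, by simp; omega, le_antisymm (hx (Fin.le_def.mpr (by simp))) ?_⟩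
    have := hx (show a ≤ (⟨b - 1, hj⟩ : Fin n) from Fin.le_def.mpr (by simp; omega))
    omega
  · exact (lt_irrefl _ hlt).elim

section Alternant

variable {n : ℕ} (v : Fin n → ℝ)

noncomputable def alternant (x : Fin n → ℤ) : Matrix (Fin n) (Fin n) ℝ :=
  Matrix.of fun a b => v a ^ (x b + (b : ℤ))

theorem schurS_div_schurS (hinj : Injective v) (x y : Fin n → ℤ) :
    schurS v y / schurS v x = (alternant v y).det / (alternant v x).det :=
  div_div_div_cancel_right₀ (Matrix.det_vandermonde_ne_zero_iff.mpr hinj) _ _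

theorem det_alternant_ne_zero (hv : ∀ i, 0 < v i) (hinj : Injective v) {x : Fin n → ℤ}
    (hx : Monotone x) : (alternant v x).det ≠ 0 := by
  have hμ : StrictMono fun b : Fin n => x b + (b : ℤ) :=
    fun b b' hb => add_lt_add_of_le_of_lt (hx hb.le) (by exact_mod_cast hb)
  have := Matrix.det_of_rpow_ne_zero hinj hv (μ := fun b => ((x b + b : ℤ) : ℝ))
    (Int.cast_injective.comp hμ.injective)
  simpa only [alternant, Real.rpow_intCast] using this

theorem alternant_add_single (x : Fin n → ℤ) (i : Fin n) (k : ℤ) :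
    alternant v (x + Pi.single i k) = (alternant v x).updateCol i fun a => v a ^ (x i + i + k) := by
  ext a b
  rcases eq_or_ne b i with rfl | hb
  · simp [alternant, add_right_comm]
  · simp [alternant, hb]

theorem alternant_sub_single (x : Fin n → ℤ) (i : Fin n) (k : ℤ) :
    alternant v (x - Pi.single i k) = (alternant v x).updateCol i fun a => v a ^ (x i + i - k) := by
  simp only [sub_eq_add_neg, ← Pi.single_neg, alternant_add_single]

theorem det_alternant_eq_zero_of_exponent_eq {x : Fin n → ℤ} {b b' : Fin n} (hb : b ≠ b')
    (h : x b + b = x b' + b') : (alternant v x).det = 0 :=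
  Matrix.det_zero_of_column_eq hb fun a => by simp [alternant, h]

theorem det_alternant_add_single_eq_zero {x : Fin n → ℤ} (hx : Monotone x) {i : Fin n}
    (h : ¬ Monotone (x + Pi.single i 1)) : (alternant v (x + Pi.single i 1)).det = 0 := by
  obtain ⟨j, hj, hxj⟩ := exists_succ_eq_of_not_monotone_add_single hx h
  have hij : i ≠ j := Fin.ne_of_val_ne (by omega)
  exact det_alternant_eq_zero_of_exponent_eq v hij (by simp [hij.symm, hxj]; omega)

theorem det_alternant_sub_single_eq_zero {x : Fin n → ℤ} (hx : Monotone x) {i : Fin n}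
    (h : ¬ Monotone (x - Pi.single i 1)) : (alternant v (x - Pi.single i 1)).det = 0 := by
  obtain ⟨j, hj, hxj⟩ := exists_pred_eq_of_not_monotone_sub_single hx h
  have hij : i ≠ j := Fin.ne_of_val_ne (by omega)
  exact det_alternant_eq_zero_of_exponent_eq v hij (by simp [hij.symm, hxj]; omega)

theorem ite_monotone_schurS_div (hinj : Injective v) (x : Fin n → ℤ) {y : Fin n → ℤ}
    (hy : ¬ Monotone y → (alternant v y).det = 0) :
    (if Monotone y then schurS v y / schurS v x else 0) =
      (alternant v y).det / (alternant v x).det := by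
  split_ifs with h
  · exact schurS_div_schurS v hinj x y
  · rw [hy h, zero_div]

end Alternant

/-- The ratio-of-Schur `Q`-matrix is conservative: for `x` in the Weyl chamber
`W^n = {x : x 1 ≤ ... ≤ x n}`,
`Σ_i [S_{x+e_i}/S_x · 1_{x+e_i ∈ W} + S_{x-e_i}/S_x · 1_{x-e_i ∈ W}] = Σ_i (v i + v i⁻¹)`. -/
theorem stmt13 (n : ℕ) (v : Fin n → ℝ) (hv : ∀ i, 0 < v i) (hinj : Function.Injective v)
    (x : Fin n → ℤ) (hx : Monotone x) :
    (∑ i : Fin n,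
        ((if Monotone (x + Pi.single i 1) then schurS v (x + Pi.single i 1) / schurS v x else 0) +
          (if Monotone (x - Pi.single i 1) then schurS v (x - Pi.single i 1) / schurS v x
            else 0))) =
      ∑ i : Fin n, (v i + (v i)⁻¹) := by
  set A := alternant v x
  have hA : A.det ≠ 0 := det_alternant_ne_zero v hv hinj hx
  have hcol (i : Fin n) : (fun a => v a ^ (x i + i + 1)) + (fun a => v a ^ (x i + i - 1)) =
      fun a => (v a + (v a)⁻¹) * A a i := by
    ext a
    simp only [Pi.add_apply, A, alternant, Matrix.of_apply, zpow_add_one₀ (hv a).ne',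
      zpow_sub_one₀ (hv a).ne']
    ring
  calc _ = ∑ i, ((alternant v (x + Pi.single i 1)).det
          + (alternant v (x - Pi.single i 1)).det) / A.det := by
        refine Finset.sum_congr rfl fun i _ => ?_
        rw [ite_monotone_schurS_div v hinj x (det_alternant_add_single_eq_zero v hx),
          ite_monotone_schurS_div v hinj x (det_alternant_sub_single_eq_zero v hx), add_div]
    _ = (∑ i, (A.updateCol i fun a => (v a + (v a)⁻¹) * A a i).det) / A.det := by
        rw [Finset.sum_div]
        refine Finset.sum_congr rfl fun i _ => ?_
        rw [alternant_add_single, alternant_sub_single, ← Matrix.det_updateCol_add, hcol]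
    _ = _ := by rw [Matrix.sum_det_updateCol_mul, mul_div_cancel_right₀ _ hA]
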